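/- arXiv:1412.5936 — 3 statements merged into one kernel-verified Lean document; each statement's English description precedes it below -/
import Mathlib

section
/- Monotonicity of the Malthus parameter: if B, B̃ are two division rates with b ≤ B(x) ≤ B̃(x) for all x ≥ 0 (b > 0), then the associated Malthus parameters satisfy λ_B ≤ λ_{B̃}. -/
/-!
Write `S_f(λ, x) = exp (-λ x - ∫₀ˣ f) = e^{-λx} P(τ_f > x)` and `Φ_f(λ) = ∫₀^∞ f S_f`.
Since `S_f` is absolutely continuous with `S_f' = -(λ + f) S_f`, integrating over `[0, t]` gives
`∫₀ᵗ f S_f = 1 - S_f(t) - λ ∫₀ᵗ S_f`. For `λ ≥ 0` the right-hand side increases with `f`,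
because `f ≤ g` forces `S_g ≤ S_f`; hence `Φ_B(λ) ≤ Φ_{B̃}(λ)`. As `B > 0`, `Φ_B` is strictly
decreasing, so `λ_{B̃} < λ_B` would give `1/m = Φ_B(λ_B) < Φ_B(λ_{B̃}) ≤ Φ_{B̃}(λ_{B̃}) = 1/m`.
-/

open Real MeasureTheory Set Filter

theorem LipschitzOnWith.comp_absolutelyContinuousOnInterval {X Y : Type*} [PseudoMetricSpace X]
    [PseudoMetricSpace Y] {g : X → Y} {f : ℝ → X} {K : NNReal} {s : Set X} {a b : ℝ}
    (hg : LipschitzOnWith K g s) (hf : AbsolutelyContinuousOnInterval f a b)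
    (hfs : MapsTo f (uIcc a b) s) : AbsolutelyContinuousOnInterval (g ∘ f) a b := by
  unfold AbsolutelyContinuousOnInterval at hf ⊢
  have hdisj : ∀ᶠ E in AbsolutelyContinuousOnInterval.totalLengthFilter (X := ℝ) ⊓ 𝓟
      (AbsolutelyContinuousOnInterval.disjWithin a b),
      E ∈ AbsolutelyContinuousOnInterval.disjWithin a b :=
    eventually_inf_principal.mpr (Eventually.of_forall fun _ h => h)
  have hK := hf.const_mul (K : ℝ)
  rw [mul_zero] at hK
  refine squeeze_zero' (Eventually.of_forall fun E => Finset.sum_nonneg fun _ _ => dist_nonneg)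
    ?_ hK
  filter_upwards [hdisj] with E hE
  rw [Finset.mul_sum]
  exact Finset.sum_le_sum fun i hi =>
    hg.dist_le_mul _ (hfs (hE.1 i hi).1) _ (hfs (hE.1 i hi).2)

theorem ContDiff.comp_absolutelyContinuousOnInterval {F : Type*} [NormedAddCommGroup F]
    [NormedSpace ℝ F] {g : ℝ → F} {f : ℝ → ℝ} {a b : ℝ} (hg : ContDiff ℝ 1 g)
    (hf : AbsolutelyContinuousOnInterval f a b) :
    AbsolutelyContinuousOnInterval (g ∘ f) a b := by
  obtain ⟨R, hR⟩ := (isCompact_uIcc.image_of_continuousOn hf.continuousOn).isBounded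
    |>.subset_closedBall 0
  obtain ⟨K, hK⟩ := hg.contDiffOn.exists_lipschitzOnWith one_ne_zero (convex_closedBall 0 R)
    (isCompact_closedBall 0 R)
  exact hK.comp_absolutelyContinuousOnInterval hf fun x hx => hR (mem_image_of_mem f hx)

theorem Measurable.intervalIntegral_right {f : ℝ → ℝ} (hf : Measurable f) (a : ℝ) :
    Measurable fun x => ∫ y in a..x, f y := by
  have hIoc : ∀ u v : ℝ → ℝ, Measurable u → Measurable v →
      Measurable fun x => ∫ y in Ioc (u x) (v x), f y := by
    intro u v hu hv
    have hS : MeasurableSet {p : ℝ × ℝ | u p.1 < p.2 ∧ p.2 ≤ v p.1} :=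
      (measurableSet_lt (hu.comp measurable_fst) measurable_snd).inter
        (measurableSet_le measurable_snd (hv.comp measurable_fst))
    convert (((hf.comp measurable_snd).indicator hS).stronglyMeasurable.integral_prod_right'
      (ν := volume)).measurable using 2 with x
    rw [← integral_indicator measurableSet_Ioc]
    rfl
  exact (hIoc _ _ measurable_const measurable_id).sub (hIoc _ _ measurable_id measurable_const)

theorem lintegral_ofReal_eq_of_integral_eq {α : Type*} [MeasurableSpace α] {μ : Measure α}
    {F : α → ℝ} {c : ℝ} (hF : 0 ≤ᵐ[μ] F) (h : ∫ x, F x ∂μ = c) (hc : c ≠ 0) :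
    ∫⁻ x, ENNReal.ofReal (F x) ∂μ = ENNReal.ofReal c := by
  rw [← h, ofReal_integral_eq_lintegral_ofReal (.of_integral_ne_zero (h ▸ hc)) hF]

noncomputable def discountedSurvival (f : ℝ → ℝ) (l x : ℝ) : ℝ :=
  exp (-l * x - ∫ y in (0:ℝ)..x, f y)

noncomputable def discountedDensity (f : ℝ → ℝ) (l x : ℝ) : ℝ :=
  f x * discountedSurvival f l x

section

variable {f g : ℝ → ℝ} {l t : ℝ}

theorem discountedSurvival_zero : discountedSurvival f l 0 = 1 := by
  simp [discountedSurvival]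

theorem discountedSurvival_pos (x : ℝ) : 0 < discountedSurvival f l x := exp_pos _

theorem absolutelyContinuousOnInterval_discountedSurvival
    (hf : IntervalIntegrable f volume 0 t) :
    AbsolutelyContinuousOnInterval (discountedSurvival f l) 0 t := by
  have hρ : AbsolutelyContinuousOnInterval (fun x => -l * x - ∫ y in (0:ℝ)..x, f y) 0 t :=
    (LipschitzWith.id.lipschitzOnWith.absolutelyContinuousOnInterval.const_mul (-l)).sub
      (hf.absolutelyContinuousOnInterval_intervalIntegral left_mem_uIcc)
  exact contDiff_exp.comp_absolutelyContinuousOnInterval hρ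

theorem ae_hasDerivAt_discountedSurvival (hf : IntervalIntegrable f volume 0 t) :
    ∀ᵐ x, x ∈ uIcc 0 t →
      HasDerivAt (discountedSurvival f l) (-(l + f x) * discountedSurvival f l x) x := by
  filter_upwards [hf.ae_hasDerivAt_integral] with x hx hxt
  have hρ : HasDerivAt (fun y => -l * y - ∫ s in (0:ℝ)..y, f s) (-l - f x) x := by
    simpa using ((hasDerivAt_id x).const_mul (-l)).fun_sub (hx hxt 0 left_mem_uIcc)
  exact hρ.exp.congr_deriv (by rw [discountedSurvival]; ring)

theorem integral_add_mul_discountedSurvival (hf : IntervalIntegrable f volume 0 t) :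
    ∫ x in (0:ℝ)..t, (l + f x) * discountedSurvival f l x = 1 - discountedSurvival f l t := by
  have hS := absolutelyContinuousOnInterval_discountedSurvival (l := l) hf
  have hderiv : ∫ x in (0:ℝ)..t, deriv (discountedSurvival f l) x =
      -∫ x in (0:ℝ)..t, (l + f x) * discountedSurvival f l x := by
    rw [← intervalIntegral.integral_neg]
    refine intervalIntegral.integral_congr_ae ?_
    filter_upwards [ae_hasDerivAt_discountedSurvival (l := l) hf] with x hx hxt
    rw [(hx (uIoc_subset_uIcc hxt)).deriv, neg_mul]
  rw [← neg_sub, ← discountedSurvival_zero (f := f) (l := l), ← hS.integral_deriv_eq_sub,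
    hderiv, neg_neg]

theorem integral_discountedDensity (hf : IntervalIntegrable f volume 0 t) :
    ∫ x in (0:ℝ)..t, discountedDensity f l x =
      1 - discountedSurvival f l t - l * ∫ x in (0:ℝ)..t, discountedSurvival f l x := by
  have hS : ContinuousOn (discountedSurvival f l) (uIcc 0 t) :=
    (absolutelyContinuousOnInterval_discountedSurvival hf).continuousOn
  have := integral_add_mul_discountedSurvival (l := l) hf
  simp only [add_mul] at this
  rw [intervalIntegral.integral_add (hS.intervalIntegrable.const_mul l)
    (hf.mul_continuousOn hS), intervalIntegral.integral_const_mul] at this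
  rw [← this]
  simp only [discountedDensity]
  ring

theorem discountedSurvival_le_of_le {x : ℝ} (hx : 0 ≤ x) (hf : IntervalIntegrable f volume 0 x)
    (hg : IntervalIntegrable g volume 0 x) (hfg : ∀ y ∈ Ioc 0 x, f y ≤ g y) :
    discountedSurvival g l x ≤ discountedSurvival f l x := by
  have := intervalIntegral.integral_mono_on_of_le_Ioo hx hf hg
    fun y hy => hfg y (Ioo_subset_Ioc_self hy)
  exact exp_le_exp.2 (by linarith)

theorem integral_discountedDensity_mono (hl : 0 ≤ l) (ht : 0 ≤ t)
    (hf : IntervalIntegrable f volume 0 t) (hg : IntervalIntegrable g volume 0 t)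
    (hfg : ∀ x ∈ Ioc 0 t, f x ≤ g x) :
    ∫ x in (0:ℝ)..t, discountedDensity f l x ≤ ∫ x in (0:ℝ)..t, discountedDensity g l x := by
  have hsub : ∀ x ∈ Icc 0 t, uIcc 0 x ⊆ uIcc 0 t := fun x hx =>
    uIcc_subset_uIcc_left (mem_uIcc_of_le hx.1 hx.2)
  have hSt : discountedSurvival g l t ≤ discountedSurvival f l t :=
    discountedSurvival_le_of_le ht hf hg hfg
  have hS : ∫ x in (0:ℝ)..t, discountedSurvival g l x ≤
      ∫ x in (0:ℝ)..t, discountedSurvival f l x := by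
    refine intervalIntegral.integral_mono_on_of_le_Ioo ht
      (absolutelyContinuousOnInterval_discountedSurvival hg).continuousOn.intervalIntegrable
      (absolutelyContinuousOnInterval_discountedSurvival hf).continuousOn.intervalIntegrable
      fun x hx => discountedSurvival_le_of_le hx.1.le
        (hf.mono_set (hsub x (Ioo_subset_Icc_self hx)))
        (hg.mono_set (hsub x (Ioo_subset_Icc_self hx)))
        fun y hy => hfg y ⟨hy.1, hy.2.trans hx.2.le⟩
  rw [integral_discountedDensity hf, integral_discountedDensity hg]
  nlinarith

theorem measurable_discountedDensity (hf : Measurable f) (l : ℝ) :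
    Measurable (discountedDensity f l) :=
  hf.mul ((measurable_const.mul measurable_id).sub (hf.intervalIntegral_right 0)).exp

theorem setLIntegral_discountedDensity_Ioc_mono (hl : 0 ≤ l) (hf : Measurable f)
    (hf0 : ∀ x ∈ Ioc 0 t, 0 ≤ f x) (hfg : ∀ x ∈ Ioc 0 t, f x ≤ g x)
    (hg : IntegrableOn g (Ioc 0 t)) :
    ∫⁻ x in Ioc 0 t, ENNReal.ofReal (discountedDensity f l x) ≤
      ∫⁻ x in Ioc 0 t, ENNReal.ofReal (discountedDensity g l x) := by
  rcases le_total t 0 with ht | ht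
  · simp [Ioc_eq_empty_of_le ht]
  have hlint : ∀ h : ℝ → ℝ, IntegrableOn h (Ioc 0 t) → (∀ x ∈ Ioc 0 t, 0 ≤ h x) →
      ∫⁻ x in Ioc 0 t, ENNReal.ofReal (discountedDensity h l x) =
        ENNReal.ofReal (∫ x in (0:ℝ)..t, discountedDensity h l x) := by
    intro h hh hh0
    have hi := (intervalIntegrable_iff_integrableOn_Ioc_of_le ht).2 hh
    rw [intervalIntegral.integral_of_le ht]
    exact (ofReal_integral_eq_lintegral_ofReal
      (hi.mul_continuousOn (absolutelyContinuousOnInterval_discountedSurvival hi).continuousOn).1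
      (ae_restrict_of_forall_mem measurableSet_Ioc fun x hx =>
        mul_nonneg (hh0 x hx) (discountedSurvival_pos x).le)).symm
  have hf' : IntegrableOn f (Ioc 0 t) := hg.mono' hf.aestronglyMeasurable
    (ae_restrict_of_forall_mem measurableSet_Ioc fun x hx =>
      (Real.norm_of_nonneg (hf0 x hx)).trans_le (hfg x hx))
  rw [hlint f hf' hf0, hlint g hg fun x hx => (hf0 x hx).trans (hfg x hx)]
  exact ENNReal.ofReal_le_ofReal (integral_discountedDensity_mono hl ht
    ((intervalIntegrable_iff_integrableOn_Ioc_of_le ht).2 hf')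
    ((intervalIntegrable_iff_integrableOn_Ioc_of_le ht).2 hg) hfg)

theorem setLIntegral_discountedDensity_Ioo_mono (hl : 0 ≤ l) (hf : Measurable f)
    (hf0 : ∀ x ∈ Ioo 0 t, 0 ≤ f x) (hfg : ∀ x ∈ Ioo 0 t, f x ≤ g x)
    (hg : ∀ s < t, IntegrableOn g (Ioc 0 s)) :
    ∫⁻ x in Ioo 0 t, ENNReal.ofReal (discountedDensity f l x) ≤
      ∫⁻ x in Ioo 0 t, ENNReal.ofReal (discountedDensity g l x) := by
  have hs : ∀ n : ℕ, t - 1 / (n + 1) < t := fun n => sub_lt_self t Nat.one_div_pos_of_nat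
  have hsub : ∀ n : ℕ, Ioc 0 (t - 1 / (n + 1)) ⊆ Ioo 0 t := fun n x hx =>
    ⟨hx.1, hx.2.trans_lt (hs n)⟩
  have hU : Ioo 0 t = ⋃ n : ℕ, Ioc 0 (t - 1 / (n + 1)) := by
    refine (iUnion_subset hsub).antisymm' fun x hx => ?_
    obtain ⟨n, hn⟩ := exists_nat_one_div_lt (sub_pos.2 hx.2)
    exact mem_iUnion.2 ⟨n, hx.1, by linarith⟩
  have hd : Directed (· ⊆ ·) fun n : ℕ => Ioc (0:ℝ) (t - 1 / (n + 1)) :=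
    Monotone.directed_le fun m n hmn => Ioc_subset_Ioc_right (by gcongr)
  rw [hU, setLIntegral_iUnion_of_directed _ hd, setLIntegral_iUnion_of_directed _ hd]
  exact iSup_mono fun n => setLIntegral_discountedDensity_Ioc_mono hl hf
    (fun x hx => hf0 x (hsub n hx)) (fun x hx => hfg x (hsub n hx)) (hg _ (hs n))

theorem discountedDensity_le_of_not_integrableOn {x : ℝ} (hx : 0 < x)
    (hf0 : ∀ y ∈ Ioc 0 x, 0 ≤ f y) (hfg : f x ≤ g x)
    (hg : ¬ IntegrableOn g (Ioc 0 x)) :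
    discountedDensity f l x ≤ discountedDensity g l x := by
  have hJf : 0 ≤ ∫ y in (0:ℝ)..x, f y := by
    rw [intervalIntegral.integral_of_le hx.le]
    exact setIntegral_nonneg measurableSet_Ioc hf0
  have hJg : ∫ y in (0:ℝ)..x, g y = 0 := intervalIntegral.integral_undef
    ((intervalIntegrable_iff_integrableOn_Ioc_of_le hx.le).not.2 hg)
  calc discountedDensity f l x ≤ f x * exp (-l * x) :=
        mul_le_mul_of_nonneg_left (exp_le_exp.2 (by linarith)) (hf0 x ⟨hx, le_rfl⟩)
    _ ≤ discountedDensity g l x := by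
        rw [discountedDensity, discountedSurvival, hJg, sub_zero]
        exact mul_le_mul_of_nonneg_right hfg (exp_pos _).le

theorem lintegral_discountedDensity_mono (hl : 0 ≤ l) (hf : Measurable f)
    (hf0 : ∀ x ∈ Ioi 0, 0 ≤ f x) (hfg : ∀ x ∈ Ioi 0, f x ≤ g x) :
    ∫⁻ x in Ioi 0, ENNReal.ofReal (discountedDensity f l x) ≤
      ∫⁻ x in Ioi 0, ENNReal.ofReal (discountedDensity g l x) := by
  -- Where `g` is not integrable on `(0, x]`, `∫₀ˣ g` takes the junk value `0` and the
  -- comparison holds pointwise; such `x` form a ray above `c = sInf V`.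
  set V := {x : ℝ | ¬ IntegrableOn g (Ioc 0 x)}
  have hV0 : ∀ x ∈ V, 0 < x := fun x hx => not_le.1 fun h => hx (by simp [Ioc_eq_empty_of_le h])
  rcases V.eq_empty_or_nonempty with hV | hV
  · have hd : Directed (· ⊆ ·) fun n : ℕ => Ioc (0:ℝ) n :=
      Monotone.directed_le fun m n hmn => Ioc_subset_Ioc_right (by exact_mod_cast hmn)
    have hU : Ioi (0:ℝ) = ⋃ n : ℕ, Ioc 0 (n : ℝ) := by
      refine (iUnion_subset fun n => Ioc_subset_Ioi_self).antisymm' fun x hx => ?_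
      obtain ⟨n, hn⟩ := exists_nat_ge x
      exact mem_iUnion.2 ⟨n, hx, hn⟩
    rw [hU, setLIntegral_iUnion_of_directed _ hd, setLIntegral_iUnion_of_directed _ hd]
    exact iSup_mono fun n => setLIntegral_discountedDensity_Ioc_mono hl hf
      (fun x hx => hf0 x hx.1) (fun x hx => hfg x hx.1)
      (not_not.1 (eq_empty_iff_forall_notMem.1 hV _))
  set c := sInf V
  have hbdd : BddBelow V := ⟨0, fun x hx => (hV0 x hx).le⟩
  have hc : 0 ≤ c := le_csInf hV fun x hx => (hV0 x hx).le
  have hlt : ∀ s < c, IntegrableOn g (Ioc 0 s) := fun s hs =>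
    not_not.1 fun h => (csInf_le hbdd h).not_gt hs
  have hgt : ∀ x, c < x → ¬ IntegrableOn g (Ioc 0 x) := fun x hx h => by
    obtain ⟨v, hv, hvx⟩ := exists_lt_of_csInf_lt hV hx
    exact hv (h.mono_set (Ioc_subset_Ioc_right hvx.le))
  rw [← Ioc_union_Ioi_eq_Ioi hc, lintegral_union measurableSet_Ioi (Ioc_disjoint_Ioi le_rfl),
    lintegral_union measurableSet_Ioi (Ioc_disjoint_Ioi le_rfl),
    setLIntegral_congr Ioo_ae_eq_Ioc.symm, setLIntegral_congr Ioo_ae_eq_Ioc.symm]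
  refine add_le_add (setLIntegral_discountedDensity_Ioo_mono hl hf (fun x hx => hf0 x hx.1)
    (fun x hx => hfg x hx.1) hlt) (setLIntegral_mono' measurableSet_Ioi fun x hx => ?_)
  exact ENNReal.ofReal_le_ofReal (discountedDensity_le_of_not_integrableOn (hc.trans_lt hx)
    (fun y hy => hf0 y hy.1) (hfg x (hc.trans_lt hx)) (hgt x hx))

theorem lintegral_discountedDensity_lt_of_lt {l' : ℝ} (hf : Measurable f)
    (hpos : ∀ x ∈ Ioi 0, 0 < f x) (hl : l' < l)
    (hfin : ∫⁻ x in Ioi 0, ENNReal.ofReal (discountedDensity f l x) ≠ ⊤) :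
    ∫⁻ x in Ioi 0, ENNReal.ofReal (discountedDensity f l x) <
      ∫⁻ x in Ioi 0, ENNReal.ofReal (discountedDensity f l' x) := by
  refine lintegral_strict_mono (by simp)
    (measurable_discountedDensity hf l').ennreal_ofReal.aemeasurable hfin
    (ae_restrict_of_forall_mem measurableSet_Ioi fun x (hx : 0 < x) => ?_)
  refine (ENNReal.ofReal_lt_ofReal_iff (mul_pos (hpos x hx) (discountedSurvival_pos x))).2 ?_
  exact mul_lt_mul_of_pos_left (exp_lt_exp.2 (by nlinarith)) (hpos x hx)

end

theorem stmt_3_general (m b : ℝ) (hm : 1 < m) (hb : 0 < b)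
    (B Bt : ℝ → ℝ) (hBmeas : Measurable B)
    (hBb : ∀ x, 0 ≤ x → b ≤ B x) (hBBt : ∀ x, 0 ≤ x → B x ≤ Bt x)
    (lamB lamBt : ℝ) (hlamBt : 0 < lamBt)
    (heqB : ∫ x in Ioi (0:ℝ),
        B x * Real.exp (-lamB * x - ∫ y in (0:ℝ)..x, B y) = 1 / m)
    (heqBt : ∫ x in Ioi (0:ℝ),
        Bt x * Real.exp (-lamBt * x - ∫ y in (0:ℝ)..x, Bt y) = 1 / m) :
    lamB ≤ lamBt := by
  have hBpos : ∀ x ∈ Ioi (0:ℝ), 0 < B x := fun x hx => hb.trans_le (hBb x (le_of_lt hx))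
  have hBle : ∀ x ∈ Ioi (0:ℝ), B x ≤ Bt x := fun x hx => hBBt x (le_of_lt hx)
  have hm' : 1 / m ≠ 0 := by positivity
  have hΦB : ∫⁻ x in Ioi 0, ENNReal.ofReal (discountedDensity B lamB x) =
      ENNReal.ofReal (1 / m) :=
    lintegral_ofReal_eq_of_integral_eq (ae_restrict_of_forall_mem measurableSet_Ioi fun x hx =>
      mul_nonneg (hBpos x hx).le (discountedSurvival_pos x).le) heqB hm'
  have hΦBt : ∫⁻ x in Ioi 0, ENNReal.ofReal (discountedDensity Bt lamBt x) =
      ENNReal.ofReal (1 / m) :=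
    lintegral_ofReal_eq_of_integral_eq (ae_restrict_of_forall_mem measurableSet_Ioi fun x hx =>
      mul_nonneg ((hBpos x hx).le.trans (hBle x hx)) (discountedSurvival_pos x).le) heqBt hm'
  by_contra! hlt
  have := (lintegral_discountedDensity_lt_of_lt hBmeas hBpos hlt
    (hΦB ▸ ENNReal.ofReal_ne_top)).trans_le
    (lintegral_discountedDensity_mono hlamBt.le hBmeas (fun x hx => (hBpos x hx).le) hBle)
  rw [hΦB, hΦBt] at this
  exact lt_irrefl _ this

/-- Monotonicity of the Malthus parameter: if `b ≤ B(x) ≤ B̃(x)` for all `x ≥ 0`,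
then the associated Malthus parameters satisfy `λ_B ≤ λ_{B̃}`. -/
theorem stmt_3 (m b : ℝ) (hm : 1 < m) (hb : 0 < b)
    (B Bt : ℝ → ℝ) (hBmeas : Measurable B) (hBtmeas : Measurable Bt)
    (hBb : ∀ x, 0 ≤ x → b ≤ B x) (hBBt : ∀ x, 0 ≤ x → B x ≤ Bt x)
    (lamB lamBt : ℝ) (hlamB : 0 < lamB) (hlamBt : 0 < lamBt)
    (heqB : ∫ x in Ioi (0:ℝ),
        B x * Real.exp (-lamB * x - ∫ y in (0:ℝ)..x, B y) = 1 / m)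
    (heqBt : ∫ x in Ioi (0:ℝ),
        Bt x * Real.exp (-lamBt * x - ∫ y in (0:ℝ)..x, Bt y) = 1 / m) :
    lamB ≤ lamBt :=
  stmt_3_general m b hm hb B Bt hBmeas hBb hBBt lamB lamBt hlamBt heqB heqBt
end

section
/- If B ∈ 𝔹_{b,m} (i.e. b ≤ B(x) ≤ (m/(m-1))b and B'(x) - B(x)² ≤ 0 for all x), then the function G_B(x) = m e^{-λ_B x} B(x) e^{-∫₀^x B} - λ_B (1 - m∫₀^x e^{-λ_B y} B(y) e^{-∫₀^y B} dy) has derivative G_B'(x) = m e^{-λ_B x} e^{-∫₀^x B(y)dy} (B'(x) - B(x)²) ≤ 0, satisfies G_B(0) = mB(0) - λ_B ≥ 0 and G_B(x) → 0 as x → ∞; hence G_B ≥ 0 on [0,∞), i.e. λ_B ≤ inf_x H_B(x). -/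
/-!
Writing `F = ∫₀^x B`, the two terms of `G_B` have derivatives `m e^{-λx} e^{-F} (B' - λB - B²)`
and `λ m e^{-λx} B e^{-F}`, so `G_B' = m e^{-λx} e^{-F} (B' - B²) ≤ 0` and `G_B` is antitone.
The first term decays like `e^{-λx}` because `B` is bounded, and the Malthus equation
`m ∫₀^∞ e^{-λy} f_B(y) dy = 1` makes the second vanish at infinity, so `G_B` decreases to `0`
and is therefore nonnegative. Dividing by the positive denominator of `H_B` gives `λ_B ≤ H_B`.
-/

open Real MeasureTheory Set Filter Topology

lemma AntitoneOn.le_of_tendsto {f : ℝ → ℝ} {a l : ℝ} (hf : AntitoneOn f (Ici a))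
    (hlim : Tendsto f atTop (𝓝 l)) {x : ℝ} (hx : a ≤ x) : l ≤ f x :=
  _root_.le_of_tendsto hlim <| (eventually_ge_atTop x).mono fun _ hy => hf hx (hx.trans hy) hy

lemma exp_neg_integral_le_one {B : ℝ → ℝ} (hB : ∀ y, 0 ≤ y → 0 ≤ B y) {x : ℝ} (hx : 0 ≤ x) :
    exp (-∫ y in (0:ℝ)..x, B y) ≤ 1 :=
  exp_le_one_iff.mpr <| neg_nonpos.mpr <| intervalIntegral.integral_nonneg hx fun y hy => hB y hy.1

/-- The division-time density `f_B(y) = B(y) e^{-∫₀^y B}`, tilted by the Malthus factor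
`e^{-λy}`. -/
noncomputable def tiltedDensity (lam : ℝ) (B : ℝ → ℝ) (y : ℝ) : ℝ :=
  exp (-lam * y) * B y * exp (-∫ u in (0:ℝ)..y, B u)

/-- The function `G_B`; it equals `(1 - m ∫₀^x e^{-λy} f_B(y) dy) (H_B(x) - λ)`. -/
noncomputable def rateGap (m lam : ℝ) (B : ℝ → ℝ) (x : ℝ) : ℝ :=
  m * exp (-lam * x) * B x * exp (-∫ y in (0:ℝ)..x, B y)
    - lam * (1 - m * ∫ y in (0:ℝ)..x, tiltedDensity lam B y)

section TiltedDensity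

variable {lam C : ℝ} {B : ℝ → ℝ}

lemma tiltedDensity_eq (lam : ℝ) (B : ℝ → ℝ) (y : ℝ) :
    tiltedDensity lam B y = B y * exp (-lam * y - ∫ u in (0:ℝ)..y, B u) := by
  rw [tiltedDensity, sub_eq_add_neg, exp_add]
  ring

lemma continuous_tiltedDensity (hB : Continuous B) : Continuous (tiltedDensity lam B) := by
  unfold tiltedDensity
  have hF := intervalIntegral.continuous_primitive (μ := volume) (fun _ _ => hB.intervalIntegrable _ _) 0
  fun_prop

lemma tiltedDensity_nonneg (hB : ∀ y, 0 ≤ y → 0 ≤ B y) {y : ℝ} (hy : 0 ≤ y) :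
    0 ≤ tiltedDensity lam B y := by
  have := hB y hy
  unfold tiltedDensity
  positivity

lemma tiltedDensity_le (hB : ∀ y, 0 ≤ y → 0 ≤ B y) (hBC : ∀ y, 0 ≤ y → B y ≤ C) {y : ℝ}
    (hy : 0 ≤ y) : tiltedDensity lam B y ≤ C * exp (-lam * y) :=
  calc tiltedDensity lam B y ≤ exp (-lam * y) * B y * 1 := by
        unfold tiltedDensity
        have := hB y hy
        gcongr
        exact exp_neg_integral_le_one hB hy
    _ ≤ C * exp (-lam * y) := by
        rw [mul_one, mul_comm]
        gcongr
        exact hBC y hy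

lemma tendsto_tiltedDensity_atTop (hlam : 0 < lam) (hB : ∀ y, 0 ≤ y → 0 ≤ B y)
    (hBC : ∀ y, 0 ≤ y → B y ≤ C) : Tendsto (tiltedDensity lam B) atTop (𝓝 0) := by
  have hexp : Tendsto (fun y => C * exp (-lam * y)) atTop (𝓝 0) := by
    simpa using (tendsto_exp_atBot.comp
      (tendsto_id.const_mul_atTop_of_neg (neg_neg_iff_pos.mpr hlam))).const_mul C
  refine squeeze_zero' ?_ ?_ hexp <;> filter_upwards [eventually_ge_atTop 0] with y hy
  · exact tiltedDensity_nonneg hB hy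
  · exact tiltedDensity_le hB hBC hy

lemma integrableOn_tiltedDensity (hlam : 0 < lam) (hBc : Continuous B)
    (hB : ∀ y, 0 ≤ y → 0 ≤ B y) (hBC : ∀ y, 0 ≤ y → B y ≤ C) :
    IntegrableOn (tiltedDensity lam B) (Ioi 0) := by
  refine ((exp_neg_integrableOn_Ioi 0 hlam).const_mul C).mono'
    (continuous_tiltedDensity hBc).aestronglyMeasurable.restrict ?_
  filter_upwards [ae_restrict_mem measurableSet_Ioi] with y hy
  rw [norm_of_nonneg (tiltedDensity_nonneg hB hy.le)]
  exact tiltedDensity_le hB hBC hy.le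

end TiltedDensity

section RateGap

variable {m lam : ℝ} {B : ℝ → ℝ}

lemma hasDerivAt_rateGap (hB : Differentiable ℝ B) (x : ℝ) :
    HasDerivAt (rateGap m lam B)
      (m * exp (-lam * x) * exp (-∫ y in (0:ℝ)..x, B y) * (deriv B x - B x ^ 2)) x := by
  have hF := (hB.continuous.integral_hasStrictDerivAt 0 x).hasDerivAt
  have hPhi :=
    ((continuous_tiltedDensity (lam := lam) hB.continuous).integral_hasStrictDerivAt 0 x).hasDerivAt
  have hexp : HasDerivAt (fun x => exp (-lam * x)) (exp (-lam * x) * -lam) x := by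
    simpa using ((hasDerivAt_id x).const_mul (-lam)).exp
  have hfirst := ((hexp.const_mul m).mul (hB x).hasDerivAt).mul hF.neg.exp
  have hsecond := ((hPhi.const_mul m).const_sub 1).const_mul lam
  refine (hfirst.sub hsecond).congr_deriv ?_
  simp only [tiltedDensity, Pi.neg_apply, Pi.mul_apply]
  ring

lemma deriv_rateGap_nonpos (hB : Differentiable ℝ B) (hm : 0 ≤ m)
    (hBconc : ∀ x, 0 ≤ x → deriv B x - B x ^ 2 ≤ 0) {x : ℝ} (hx : 0 ≤ x) :
    deriv (rateGap m lam B) x ≤ 0 := by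
  rw [(hasDerivAt_rateGap hB x).deriv]
  exact mul_nonpos_of_nonneg_of_nonpos (by positivity) (hBconc x hx)

lemma rateGap_zero : rateGap m lam B 0 = m * B 0 - lam := by
  simp [rateGap]

lemma tendsto_rateGap_atTop {C : ℝ} (hm : m ≠ 0) (hlam : 0 < lam) (hBc : Continuous B)
    (hB : ∀ y, 0 ≤ y → 0 ≤ B y) (hBC : ∀ y, 0 ≤ y → B y ≤ C)
    (hMalthus : ∫ y in Ioi 0, tiltedDensity lam B y = 1 / m) :
    Tendsto (rateGap m lam B) atTop (𝓝 0) := by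
  have hfirst : Tendsto (fun x => m * tiltedDensity lam B x) atTop (𝓝 (m * 0)) :=
    (tendsto_tiltedDensity_atTop hlam hB hBC).const_mul m
  have hmass := intervalIntegral_tendsto_integral_Ioi 0
    (integrableOn_tiltedDensity hlam hBc hB hBC) tendsto_id
  rw [hMalthus] at hmass
  have hsecond := ((hmass.const_mul m).const_sub 1).const_mul lam
  rw [mul_one_div_cancel hm, sub_self, mul_zero] at hsecond
  have hlim := hfirst.sub hsecond
  rw [mul_zero, sub_zero] at hlim
  refine hlim.congr fun x => ?_
  simp only [rateGap, tiltedDensity, id]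
  ring

lemma rateGap_nonneg {C : ℝ} (hB : Differentiable ℝ B) (hm : 0 < m) (hlam : 0 < lam)
    (hBpos : ∀ y, 0 ≤ y → 0 ≤ B y) (hBC : ∀ y, 0 ≤ y → B y ≤ C)
    (hBconc : ∀ x, 0 ≤ x → deriv B x - B x ^ 2 ≤ 0)
    (hMalthus : ∫ y in Ioi 0, tiltedDensity lam B y = 1 / m) {x : ℝ} (hx : 0 ≤ x) :
    0 ≤ rateGap m lam B x := by
  have hdiff : Differentiable ℝ (rateGap m lam B) := fun y =>
    (hasDerivAt_rateGap hB y).differentiableAt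
  have hanti : AntitoneOn (rateGap m lam B) (Ici 0) :=
    antitoneOn_of_deriv_nonpos (convex_Ici 0) hdiff.continuous.continuousOn hdiff.differentiableOn
      fun y hy => deriv_rateGap_nonpos hB hm.le hBconc (interior_Ici.subset hy).le
  exact hanti.le_of_tendsto (tendsto_rateGap_atTop hm.ne' hlam hB.continuous hBpos hBC
    hMalthus) hx

end RateGap

theorem stmt_15_general (m b : ℝ) (hm : 2 ≤ m) (hb : 0 < b)
    (B : ℝ → ℝ) (hBdiff : Differentiable ℝ B)
    (hBlb : ∀ x, 0 ≤ x → b ≤ B x) (hBub : ∀ x, 0 ≤ x → B x ≤ m * b / (m - 1))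
    (hBconc : ∀ x, 0 ≤ x → deriv B x - (B x) ^ 2 ≤ 0)
    (lamB : ℝ) (hlamB : 0 < lamB) (hlamUB : lamB ≤ m * b)
    (heq : ∫ x in Ioi (0:ℝ),
        B x * Real.exp (-lamB * x - ∫ y in (0:ℝ)..x, B y) = 1 / m)
    (G : ℝ → ℝ)
    (hG : ∀ x, G x =
      m * Real.exp (-lamB * x) * B x * Real.exp (-∫ y in (0:ℝ)..x, B y)
        - lamB * (1 - m * ∫ y in (0:ℝ)..x,
            Real.exp (-lamB * y) * B y * Real.exp (-∫ u in (0:ℝ)..y, B u)))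
    (HB : ℝ → ℝ)
    (hHB : ∀ x, 0 ≤ x → HB x =
      m * Real.exp (-lamB * x) * B x * Real.exp (-∫ y in (0:ℝ)..x, B y) /
        (1 - m * ∫ y in (0:ℝ)..x,
            Real.exp (-lamB * y) * B y * Real.exp (-∫ u in (0:ℝ)..y, B u)))
    (hden : ∀ x, 0 ≤ x →
      0 < 1 - m * ∫ y in (0:ℝ)..x,
            Real.exp (-lamB * y) * B y * Real.exp (-∫ u in (0:ℝ)..y, B u)) :
    (∀ x, 0 ≤ x → deriv G x =
        m * Real.exp (-lamB * x) * Real.exp (-∫ y in (0:ℝ)..x, B y)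
          * (deriv B x - (B x) ^ 2)) ∧
    (∀ x, 0 ≤ x → deriv G x ≤ 0) ∧
    G 0 = m * B 0 - lamB ∧ 0 ≤ G 0 ∧
    Filter.Tendsto G Filter.atTop (nhds 0) ∧
    (∀ x, 0 ≤ x → 0 ≤ G x) ∧
    (∀ x, 0 ≤ x → lamB ≤ HB x) := by
  obtain rfl : G = rateGap m lamB B := funext hG
  have hm0 : 0 < m := by linarith
  have hBpos : ∀ x, 0 ≤ x → 0 ≤ B x := fun x hx => hb.le.trans (hBlb x hx)
  have hMalthus : ∫ y in Ioi 0, tiltedDensity lamB B y = 1 / m := by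
    simpa only [tiltedDensity_eq] using heq
  have hnonneg x (hx : 0 ≤ x) := rateGap_nonneg hBdiff hm0 hlamB hBpos hBub hBconc hMalthus hx
  refine ⟨fun x _ => (hasDerivAt_rateGap hBdiff x).deriv,
    fun x => deriv_rateGap_nonpos hBdiff hm0.le hBconc, rateGap_zero, ?_,
    tendsto_rateGap_atTop hm0.ne' hlamB hBdiff.continuous hBpos hBub hMalthus, hnonneg,
    fun x hx => ?_⟩
  · rw [rateGap_zero]
    nlinarith [hBlb 0 le_rfl]
  · rw [hHB x hx, le_div_iff₀ (hden x hx)]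
    linarith [hnonneg x hx, hG x]

/-- If `B ∈ 𝔹_{b,m}` (`b ≤ B ≤ mb/(m-1)` and `B' - B² ≤ 0`), then
`G_B(x) = m e^{-λ_B x} B(x) e^{-∫₀^x B} - λ_B (1 - m ∫₀^x e^{-λ_B y} B(y) e^{-∫₀^y B} dy)`
has derivative `G_B'(x) = m e^{-λ_B x} e^{-∫₀^x B}(B'(x) - B(x)²) ≤ 0`, satisfies
`G_B(0) = mB(0) - λ_B ≥ 0` and `G_B(x) → 0` as `x → ∞`; hence `G_B ≥ 0` on `[0,∞)`,
i.e. `λ_B ≤ H_B(x)` for every `x ≥ 0`. -/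
theorem stmt_15 (m b : ℝ) (hm : 2 ≤ m) (hb : 0 < b)
    (B : ℝ → ℝ) (hBdiff : Differentiable ℝ B) (hBderiv : Continuous (deriv B))
    (hBlb : ∀ x, 0 ≤ x → b ≤ B x) (hBub : ∀ x, 0 ≤ x → B x ≤ m * b / (m - 1))
    (hBconc : ∀ x, 0 ≤ x → deriv B x - (B x) ^ 2 ≤ 0)
    (lamB : ℝ) (hlamB : 0 < lamB) (hlamUB : lamB ≤ m * b)
    (heq : ∫ x in Ioi (0:ℝ),
        B x * Real.exp (-lamB * x - ∫ y in (0:ℝ)..x, B y) = 1 / m)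
    (G : ℝ → ℝ)
    (hG : ∀ x, G x =
      m * Real.exp (-lamB * x) * B x * Real.exp (-∫ y in (0:ℝ)..x, B y)
        - lamB * (1 - m * ∫ y in (0:ℝ)..x,
            Real.exp (-lamB * y) * B y * Real.exp (-∫ u in (0:ℝ)..y, B u)))
    (HB : ℝ → ℝ)
    (hHB : ∀ x, 0 ≤ x → HB x =
      m * Real.exp (-lamB * x) * B x * Real.exp (-∫ y in (0:ℝ)..x, B y) /
        (1 - m * ∫ y in (0:ℝ)..x,
            Real.exp (-lamB * y) * B y * Real.exp (-∫ u in (0:ℝ)..y, B u)))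
    (hden : ∀ x, 0 ≤ x →
      0 < 1 - m * ∫ y in (0:ℝ)..x,
            Real.exp (-lamB * y) * B y * Real.exp (-∫ u in (0:ℝ)..y, B u)) :
    (∀ x, 0 ≤ x → deriv G x =
        m * Real.exp (-lamB * x) * Real.exp (-∫ y in (0:ℝ)..x, B y)
          * (deriv B x - (B x) ^ 2)) ∧
    (∀ x, 0 ≤ x → deriv G x ≤ 0) ∧
    G 0 = m * B 0 - lamB ∧ 0 ≤ G 0 ∧
    Filter.Tendsto G Filter.atTop (nhds 0) ∧
    (∀ x, 0 ≤ x → 0 ≤ G x) ∧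
    (∀ x, 0 ≤ x → lamB ≤ HB x) :=
  stmt_15_general m b hm hb B hBdiff hBlb hBub hBconc lamB hlamB hlamUB heq G hG HB hHB hden
end

section
/- Kernel bias bound: let K be a kernel with compact support, ∫K = 1 and ∫ x^k K(x)dx = 0 for 1 ≤ k ≤ n₀, and let f be β-Hölder on an interval D with β ≤ n₀ (f has ⌊β⌋ derivatives and |f^{(⌊β⌋)}(y) - f^{(⌊β⌋)}(x)| ≤ L|x-y|^{β-⌊β⌋}). Then for x interior to D and h small enough, |∫ K_h(x-y) f(y) dy - f(x)| ≤ C L h^β, where K_h(u) = h^{-1}K(h^{-1}u) and C depends only on K and β. -/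
/-!
The substitution `y = x - h u` turns the smoothed value into `∫ K(u) f(x - h u) du`. Since `K`
integrates to `1` and annihilates `u, …, uⁿ`, it reproduces the degree-`n` Taylor polynomial `Tₙ`
of `f` at `x`, so the bias is `∫ K(u) (f - Tₙ)(x - h u) du`. The Hölder condition on `f⁽ⁿ⁾` bounds
`|f(t) - Tₙ(t)|` by `L |t - x|^β` (induction on `n`, using the mean value inequality for the
remainder, whose derivative is the remainder of `f'`), so the bias is at most
`L h^β ∫ |K(u)| |u|^β du`.
-/

open Real MeasureTheory Set
open scoped Nat

theorem abs_sub_taylorWithinEval_le_of_holder {s : Set ℝ} (hs : IsOpen s) (hsc : Convex ℝ s)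
    {L : ℝ} (hL : 0 ≤ L) {n : ℕ} {f : ℝ → ℝ} {β : ℝ} (hβ : (n : ℝ) ≤ β)
    (hf : ContDiffOn ℝ n f s)
    (hH : ∀ y ∈ s, ∀ z ∈ s, |iteratedDeriv n f z - iteratedDeriv n f y| ≤ L * |z - y| ^ (β - n))
    {x t : ℝ} (hx : x ∈ s) (ht : t ∈ s) :
    |f t - taylorWithinEval f n univ x t| ≤ L * |t - x| ^ β := by
  induction n generalizing f β t with
  | zero => simpa using hH x hx t ht
  | succ n ih =>
    have hf' : ContDiffOn ℝ n (deriv f) s := hf.deriv_of_isOpen hs (by norm_cast)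
    have hH' : ∀ y ∈ s, ∀ z ∈ s, |iteratedDeriv n (deriv f) z - iteratedDeriv n (deriv f) y|
        ≤ L * |z - y| ^ (β - 1 - n) := by
      intro y hy z hz
      simp only [← iteratedDeriv_succ']
      convert hH y hy z hz using 3
      push_cast; ring
    have hβ' : (n : ℝ) ≤ β - 1 := by push_cast at hβ; linarith
    have hderiv : ∀ y ∈ s, HasDerivAt (fun t => f t - taylorWithinEval f (n + 1) univ x t)
        (deriv f y - taylorWithinEval (deriv f) n univ x y) y := by
      intro y hy
      have hT := hasDerivAt_taylorWithinEval_succ (x₀ := x) (x := y) (s := univ) f n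
      rw [derivWithin_univ] at hT
      exact ((hf.differentiableOn (by simp)).differentiableAt (hs.mem_nhds hy)).hasDerivAt.sub hT
    have hseg : uIcc x t ⊆ s := segment_eq_uIcc x t ▸ hsc.segment_subset hx ht
    have hbound : ∀ y ∈ uIcc x t, ‖deriv f y - taylorWithinEval (deriv f) n univ x y‖
        ≤ L * |t - x| ^ (β - 1) := fun y hy => by
      rw [Real.norm_eq_abs]
      refine (ih hβ' hf' hH' (hseg hy)).trans ?_
      have hβ1 : 0 ≤ β - 1 := le_trans (Nat.cast_nonneg n) hβ'
      gcongr L * ?_ ^ _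
      exact abs_sub_left_of_mem_uIcc hy
    have hmvt := (convex_uIcc x t).norm_image_sub_le_of_norm_hasDerivWithin_le
      (fun y hy => (hderiv y (hseg hy)).hasDerivWithinAt) hbound left_mem_uIcc right_mem_uIcc
    simp only [taylorWithinEval_self, sub_self, sub_zero, Real.norm_eq_abs] at hmvt
    rcases eq_or_ne t x with rfl | htx
    · simp only [taylorWithinEval_self, sub_self, abs_zero]
      positivity
    · calc |f t - taylorWithinEval f (n + 1) univ x t| ≤ L * |t - x| ^ (β - 1) * |t - x| := hmvt
        _ = L * |t - x| ^ β := by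
          rw [mul_assoc, ← Real.rpow_add_one (abs_ne_zero.2 (sub_ne_zero.2 htx))]
          norm_num

theorem MeasureTheory.Integrable.mul_of_continuousOn_tsupport {X : Type*} [TopologicalSpace X]
    [T2Space X] [MeasurableSpace X] [OpensMeasurableSpace X] {μ : Measure X} {K g : X → ℝ}
    (hK : Integrable K μ) (hKs : HasCompactSupport K) (hg : ContinuousOn g (tsupport K)) :
    Integrable (fun u => K u * g u) μ :=
  (integrableOn_iff_integrable_of_support_subset
    ((Function.support_mul_subset_left _ _).trans (subset_tsupport K))).1
    (hK.integrableOn.mul_continuousOn hg hKs)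

theorem continuous_taylorWithinEval (f : ℝ → ℝ) (n : ℕ) (s : Set ℝ) (x : ℝ) :
    Continuous (taylorWithinEval f n s x) := by
  simp_rw [funext (taylor_within_apply f n s x)]
  fun_prop

section Kernel

variable {K : ℝ → ℝ}

theorem integral_mul_sum_monomial_eq (hK : Integrable K) (hKs : HasCompactSupport K)
    (hK0 : ∫ u, K u = 1) {n : ℕ} (hKmom : ∀ k, 1 ≤ k → k ≤ n → ∫ u, u ^ k * K u = 0)
    (c : ℕ → ℝ) : ∫ u, K u * ∑ k ∈ Finset.range (n + 1), c k * u ^ k = c 0 := by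
  have hint : ∀ k : ℕ, Integrable fun u => u ^ k * K u := fun k => by
    simpa only [mul_comm] using hK.mul_of_continuousOn_tsupport hKs (continuous_pow k).continuousOn
  calc ∫ u, K u * ∑ k ∈ Finset.range (n + 1), c k * u ^ k
      = ∫ u, ∑ k ∈ Finset.range (n + 1), c k * (u ^ k * K u) := by
        simp only [Finset.mul_sum]; congr with u; congr with k; ring
    _ = ∑ k ∈ Finset.range (n + 1), c k * ∫ u, u ^ k * K u := by
        rw [integral_finsetSum _ fun k _ => (hint k).const_mul _]
        simp only [integral_const_mul]
    _ = c 0 := by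
        rw [Finset.sum_eq_single 0 (fun k hk hk0 => by
            rw [hKmom k (Nat.one_le_iff_ne_zero.2 hk0) (Nat.lt_succ_iff.1 (Finset.mem_range.1 hk)),
              mul_zero])
          fun h0 => (h0 (Finset.mem_range.2 n.succ_pos)).elim]
        simp [hK0]

theorem integral_mul_taylorWithinEval_sub_mul (hK : Integrable K) (hKs : HasCompactSupport K)
    (hK0 : ∫ u, K u = 1) {n : ℕ} (hKmom : ∀ k, 1 ≤ k → k ≤ n → ∫ u, u ^ k * K u = 0)
    (f : ℝ → ℝ) (s : Set ℝ) (x h : ℝ) :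
    ∫ u, K u * taylorWithinEval f n s x (x - h * u) = f x := by
  have hT : ∀ u, taylorWithinEval f n s x (x - h * u) = ∑ k ∈ Finset.range (n + 1),
      ((k ! : ℝ)⁻¹ * (-h) ^ k * iteratedDerivWithin k f s x) * u ^ k := fun u => by
    rw [taylor_within_apply]
    congr with k
    rw [show x - h * u - x = -h * u by ring, mul_pow, smul_eq_mul]
    ring
  simp only [hT, integral_mul_sum_monomial_eq hK hKs hK0 hKmom]
  simp

theorem integral_rescaled_kernel_mul (K g : ℝ → ℝ) (x : ℝ) {h : ℝ} (hh : 0 < h) :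
    ∫ y, h⁻¹ * K (h⁻¹ * (x - y)) * g y = ∫ u, K u * g (x - h * u) := by
  set F : ℝ → ℝ := fun y => h⁻¹ * K (h⁻¹ * (x - y)) * g y
  calc ∫ y, F y = ∫ t, F (x - t) := (integral_sub_left_eq_self F volume x).symm
    _ = h * ∫ u, F (x - h * u) := by
        rw [Measure.integral_comp_mul_left (fun t => F (x - t)) h, abs_of_pos (inv_pos.2 hh),
          smul_eq_mul, mul_inv_cancel_left₀ hh.ne']
    _ = ∫ u, K u * g (x - h * u) := by
        rw [← integral_const_mul]
        congr with u
        simp only [F, sub_sub_cancel, inv_mul_cancel_left₀ hh.ne']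
        field_simp

theorem setIntegral_rescaled_kernel_mul {S : Set ℝ} (g : ℝ → ℝ) {x h : ℝ} (hh : 0 < h)
    (hS : ∀ u ∈ tsupport K, x - h * u ∈ S) :
    ∫ y in S, h⁻¹ * K (h⁻¹ * (x - y)) * g y = ∫ u, K u * g (x - h * u) := by
  rw [setIntegral_eq_integral_of_forall_compl_eq_zero fun y hy => ?_,
    integral_rescaled_kernel_mul K g x hh]
  rw [image_eq_zero_of_notMem_tsupport (f := K) fun hu => hy ?_, mul_zero, zero_mul]
  simpa [mul_inv_cancel_left₀ hh.ne'] using hS _ hu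

theorem HasCompactSupport.exists_pos_forall_sub_mul_mem (hKs : HasCompactSupport K)
    {s : Set ℝ} (hs : IsOpen s) {x : ℝ} (hx : x ∈ s) :
    ∃ h₀ > 0, ∀ h, 0 < h → h < h₀ → ∀ u ∈ tsupport K, x - h * u ∈ s := by
  obtain ⟨ε, hε, hball⟩ := Metric.isOpen_iff.1 hs x hx
  obtain ⟨R, hR, hKR⟩ := hKs.isBounded.subset_closedBall_lt 0 0
  refine ⟨ε / R, div_pos hε hR, fun h hh hh' u hu => hball ?_⟩
  have hu' : |u| ≤ R := by simpa using hKR hu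
  rw [Metric.mem_ball, Real.dist_eq, sub_sub_cancel_left, abs_neg, abs_mul, abs_of_pos hh]
  calc h * |u| ≤ h * R := by gcongr
    _ < ε := (lt_div_iff₀ hR).1 hh'

theorem abs_integral_kernel_mul_sub_le_of_holder (hK : Integrable K) (hKs : HasCompactSupport K)
    (hK0 : ∫ u, K u = 1) {n : ℕ} (hKmom : ∀ k, 1 ≤ k → k ≤ n → ∫ u, u ^ k * K u = 0)
    {s : Set ℝ} (hs : IsOpen s) (hsc : Convex ℝ s) {f : ℝ → ℝ} {L β : ℝ} (hL : 0 ≤ L)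
    (hβ : (n : ℝ) ≤ β) (hf : ContDiffOn ℝ n f s)
    (hH : ∀ y ∈ s, ∀ z ∈ s, |iteratedDeriv n f z - iteratedDeriv n f y| ≤ L * |z - y| ^ (β - n))
    {x h : ℝ} (hx : x ∈ s) (hh : 0 < h) (hxh : ∀ u ∈ tsupport K, x - h * u ∈ s) :
    |(∫ u, K u * f (x - h * u)) - f x| ≤ L * h ^ β * ∫ u, |K u| * |u| ^ β := by
  set T := taylorWithinEval f n univ x
  have hβ0 : 0 ≤ β := (Nat.cast_nonneg n).trans hβ
  have hint_f : Integrable fun u => K u * f (x - h * u) :=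
    hK.mul_of_continuousOn_tsupport hKs (hf.continuousOn.comp (by fun_prop) hxh)
  have hint_T : Integrable fun u => K u * T (x - h * u) :=
    hK.mul_of_continuousOn_tsupport hKs
      ((continuous_taylorWithinEval f n univ x).comp (by fun_prop)).continuousOn
  have hint_bound : Integrable fun u => |K u| * |u| ^ β :=
    hK.abs.mul_of_continuousOn_tsupport hKs.abs
      (continuous_abs.rpow_const fun _ => Or.inr hβ0).continuousOn
  rw [← integral_mul_taylorWithinEval_sub_mul hK hKs hK0 hKmom f univ x h,
    ← integral_sub hint_f hint_T, ← integral_const_mul]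
  refine abs_integral_le_integral_abs.trans
    (integral_mono (hint_f.sub hint_T).abs (hint_bound.const_mul _) fun u => ?_)
  by_cases hu : u ∈ tsupport K
  · calc |K u * f (x - h * u) - K u * T (x - h * u)|
        = |K u| * |f (x - h * u) - T (x - h * u)| := by rw [← mul_sub, abs_mul]
      _ ≤ |K u| * (L * |x - h * u - x| ^ β) := by
        gcongr
        exact abs_sub_taylorWithinEval_le_of_holder hs hsc hL hβ hf hH hx (hxh u hu)
      _ = L * h ^ β * (|K u| * |u| ^ β) := by
        rw [sub_sub_cancel_left, abs_neg, abs_mul, abs_of_pos hh, mul_rpow hh.le (abs_nonneg u)]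
        ring
  · simp [image_eq_zero_of_notMem_tsupport hu]

end Kernel

theorem stmt_17_general (K : ℝ → ℝ) (hKint : Integrable K)
    (hKsupp : HasCompactSupport K)
    (hK0 : ∫ u, K u = 1)
    (n₀ : ℕ)
    (hKmom : ∀ k : ℕ, 1 ≤ k → k ≤ n₀ → ∫ u, u ^ k * K u = 0)
    (β : ℝ) (hβn₀ : β ≤ n₀)
    (n : ℕ) (hn : (n : ℝ) < β) :
    ∃ C : ℝ, 0 < C ∧
      ∀ (d₁ d₂ : ℝ) (f : ℝ → ℝ) (L : ℝ) (x : ℝ),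
        0 ≤ L →
        ContDiffOn ℝ n f (Icc d₁ d₂) →
        (∀ y ∈ Icc d₁ d₂, ∀ z ∈ Icc d₁ d₂,
          |iteratedDeriv n f z - iteratedDeriv n f y| ≤ L * |z - y| ^ (β - n)) →
        x ∈ Ioo d₁ d₂ →
        ∃ h₀ : ℝ, 0 < h₀ ∧ ∀ h : ℝ, 0 < h → h < h₀ →
          |(∫ y in Icc d₁ d₂, h⁻¹ * K (h⁻¹ * (x - y)) * f y) - f x|
            ≤ C * L * h ^ β := by
  set I := ∫ u, |K u| * |u| ^ β
  have hI : 0 ≤ I := integral_nonneg fun u => by positivity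
  have hnn₀ : n ≤ n₀ := by exact_mod_cast (hn.trans_le hβn₀).le
  refine ⟨1 + I, by positivity, fun d₁ d₂ f L x hL hf hH hx => ?_⟩
  obtain ⟨h₀, hh₀, hxh⟩ := hKsupp.exists_pos_forall_sub_mul_mem isOpen_Ioo hx
  refine ⟨h₀, hh₀, fun h hh hhh₀ => ?_⟩
  have hxh' := hxh h hh hhh₀
  rw [setIntegral_rescaled_kernel_mul f hh fun u hu => Ioo_subset_Icc_self (hxh' u hu)]
  calc _ ≤ L * h ^ β * I :=
        abs_integral_kernel_mul_sub_le_of_holder hKint hKsupp hK0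
          (fun k hk hkn => hKmom k hk (hkn.trans hnn₀)) isOpen_Ioo (convex_Ioo d₁ d₂) hL hn.le
          (hf.mono Ioo_subset_Icc_self)
          (fun y hy z hz => hH y (Ioo_subset_Icc_self hy) z (Ioo_subset_Icc_self hz)) hx hh hxh'
    _ ≤ (1 + I) * L * h ^ β := by
        nlinarith [mul_nonneg hL (rpow_nonneg hh.le β)]

/-- Kernel bias bound: let `K` be a compactly supported kernel with `∫K = 1` and
vanishing moments of orders `1,…,n₀`, and let `f` be `β`-Hölder (with `n < β ≤ n+1`,
`n = ⌊β⌋`, `β ≤ n₀`) on an interval `D = [d₁,d₂]` with Hölder constant `L`.  Then there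
is `C > 0` depending only on `K` and `β` such that for every `x` interior to `D` and
`h` small enough, `|∫ K_h(x-y) f(y) dy - f(x)| ≤ C L h^β`. -/
theorem stmt_17 (K : ℝ → ℝ) (hKmeas : Measurable K) (hKint : Integrable K)
    (hKsupp : HasCompactSupport K)
    (hK0 : ∫ u, K u = 1)
    (n₀ : ℕ) (hn₀ : 1 ≤ n₀)
    (hKmom : ∀ k : ℕ, 1 ≤ k → k ≤ n₀ → ∫ u, u ^ k * K u = 0)
    (β : ℝ) (hβpos : 0 < β) (hβn₀ : β ≤ n₀)
    (n : ℕ) (hn : (n : ℝ) < β) (hn' : β ≤ n + 1) :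
    ∃ C : ℝ, 0 < C ∧
      ∀ (d₁ d₂ : ℝ) (f : ℝ → ℝ) (L : ℝ) (x : ℝ),
        0 ≤ L →
        ContDiffOn ℝ n f (Icc d₁ d₂) →
        (∀ y ∈ Icc d₁ d₂, ∀ z ∈ Icc d₁ d₂,
          |iteratedDeriv n f z - iteratedDeriv n f y| ≤ L * |z - y| ^ (β - n)) →
        x ∈ Ioo d₁ d₂ →
        ∃ h₀ : ℝ, 0 < h₀ ∧ ∀ h : ℝ, 0 < h → h < h₀ →
          |(∫ y in Icc d₁ d₂, h⁻¹ * K (h⁻¹ * (x - y)) * f y) - f x|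
            ≤ C * L * h ^ β :=
  stmt_17_general K hKint hKsupp hK0 n₀ hKmom β hβn₀ n hn
end
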